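/- In ℝ² with a seminorm under which (1,0), (−1,0), (0,1), (0,−1) are all unit vectors, the closed unit ball is contained in the union of the two strips Set1 = {(x,y) : x−1 ≤ y ≤ x+1} and Set2 = {(x,y) : −x−1 ≤ y ≤ −x+1}. -/

import Mathlib

theorem Seminorm.abs_sub_map_inl_inr_le {E F : Type*} [AddCommGroup E] [Module ℝ E]
    [AddCommGroup F] [Module ℝ F] (p : Seminorm ℝ (E × F)) (x : E) (y : F) :
    |p (x, 0) - p (0, y)| ≤ p (x, y) := by
  have hneg : p (0, -y) = p (0, y) := by
    rw [← map_neg_eq_map p (0, y), Prod.neg_mk, neg_zero]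
  have := abs_sub_map_le_sub p (x, 0) (0, -y)
  rwa [hneg, Prod.mk_sub_mk, sub_zero, zero_sub, neg_neg] at this

theorem Seminorm.map_smul_of_map_eq_one {E : Type*} [AddCommGroup E] [Module ℝ E]
    (p : Seminorm ℝ E) {v : E} (hv : p v = 1) (t : ℝ) : p (t • v) = |t| := by
  rw [map_smul_eq_mul, hv, mul_one, Real.norm_eq_abs]

theorem Seminorm.abs_sub_abs_le_of_map_single_eq_one (p : Seminorm ℝ (ℝ × ℝ))
    (h1 : p (1, 0) = 1) (h3 : p (0, 1) = 1) (x y : ℝ) : |(|x| - |y|)| ≤ p (x, y) := by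
  have hx : p (x, 0) = |x| := by simpa using p.map_smul_of_map_eq_one h1 x
  have hy : p (0, y) = |y| := by simpa using p.map_smul_of_map_eq_one h3 y
  simpa [hx, hy] using p.abs_sub_map_inl_inr_le x y

/-- `|(|x| - |y|)|` is `|x - y|` or `|x + y|` according as `x` and `y` have equal or opposite
signs. -/
theorem strips_of_abs_abs_sub_abs_le_one {x y : ℝ} (h : |(|x| - |y|)| ≤ 1) :
    (x - 1 ≤ y ∧ y ≤ x + 1) ∨ (-x - 1 ≤ y ∧ y ≤ -x + 1) := by
  rw [abs_le] at h
  rcases abs_cases x with ⟨ex, _⟩ | ⟨ex, _⟩ <;> rcases abs_cases y with ⟨ey, _⟩ | ⟨ey, _⟩ <;>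
    rw [ex, ey] at h
  · exact Or.inl ⟨by linarith, by linarith⟩
  · exact Or.inr ⟨by linarith, by linarith⟩
  · exact Or.inr ⟨by linarith, by linarith⟩
  · exact Or.inl ⟨by linarith, by linarith⟩

theorem stmt_14 (p : Seminorm ℝ (ℝ × ℝ))
    (h1 : p (1, 0) = 1) (h3 : p (0, 1) = 1) :
    {v : ℝ × ℝ | p v ≤ 1} ⊆
      {v : ℝ × ℝ | v.1 - 1 ≤ v.2 ∧ v.2 ≤ v.1 + 1} ∪
      {v : ℝ × ℝ | -v.1 - 1 ≤ v.2 ∧ v.2 ≤ -v.1 + 1} := by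
  rintro ⟨x, y⟩ (hv : p (x, y) ≤ 1)
  exact strips_of_abs_abs_sub_abs_le_one
    ((p.abs_sub_abs_le_of_map_single_eq_one h1 h3 x y).trans hv)
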